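/- arXiv:2207.12765 — 2 statements merged into one kernel-verified Lean document; each statement's English description precedes it below -/
import Mathlib

section
/- Let X be a strongly 0-dimensional metrizable space. Then the set of all gap-like metrics in Met(X) is comeager in the space (Met(X), D_X). -/
open Set
open scoped ENNReal

/-- The space `Met(X)` of metrics generating the topology of `X`. -/
def MetricCompat (X : Type*) [t : TopologicalSpace X] : Type _ :=
  { m : MetricSpace X // m.toUniformSpace.toTopologicalSpace = t }

namespace MetricCompat

variable {X : Type*} [TopologicalSpace X]

/-- The distance function of an element of `Met(X)`. -/
noncomputable def dist (d : MetricCompat X) (x y : X) : ℝ := d.1.dist x y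

/-- The supremum distance `D_X`, valued in `[0,∞]`. -/
noncomputable def supDist (d e : MetricCompat X) : ℝ≥0∞ :=
  ⨆ p : X × X, ENNReal.ofReal |d.dist p.1 p.2 - e.dist p.1 p.2|

/-- The topology on `Met(X)` induced by the open balls of `D_X`. -/
noncomputable instance : TopologicalSpace (MetricCompat X) :=
  TopologicalSpace.generateFrom
    { U | ∃ (d : MetricCompat X) (r : ℝ≥0∞), 0 < r ∧ U = { e | supDist d e < r } }

end MetricCompat

/-- A space is strongly `0`-dimensional if disjoint closed sets are separated by a clopen set. -/
def StronglyZeroDim (X : Type*) [TopologicalSpace X] : Prop :=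
  ∀ A B : Set X, IsClosed A → IsClosed B → Disjoint A B →
    ∃ V : Set X, IsClopen V ∧ A ⊆ V ∧ Disjoint V B

/-- A metric `d` is gap-like if for every `p`, the set `{d(p,x) : x ∈ X}` is not dense in
any neighborhood of `0` in `[0,∞)`. -/
def GapLike {X : Type*} [TopologicalSpace X] (d : MetricCompat X) : Prop :=
  ∀ p : X, ¬ ∃ U : Set ℝ, U ∈ nhdsWithin 0 (Set.Ici 0) ∧ U ⊆ Set.Ici 0 ∧
    U ⊆ closure { r : ℝ | ∃ x : X, d.dist p x = r }

/-!
Let `gapSet ε` be the set of metrics whose distances avoid some interval `(a, b) ⊆ (0, ε]`,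
uniformly in the base point. A `D_X`-perturbation smaller than `(b - a) / 3` still leaves a gap,
so `gapSet ε` is open, and a metric lying in every `gapSet (1 / (n + 1))` is gap-like. For
density, paracompactness and strong zero-dimensionality give a partition of `X` into clopen
pieces of `d`-diameter at most `η / 2`; replacing `d` by `max d η` between different pieces gives
a compatible metric within `η` of `d` whose distances skip `(η / 2, η)`.
-/

section LocallyConstantRefinement

variable {X ι : Type*} [TopologicalSpace X]

theorem StronglyZeroDim.normalSpace (hX : StronglyZeroDim X) : NormalSpace X where
  normal A B hA hB hAB := by
    obtain ⟨V, hV, hAV, hVB⟩ := hX A B hA hB hAB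
    exact ⟨V, Vᶜ, hV.isOpen, hV.isClosed.isOpen_compl, hAV, hVB.subset_compl_left,
      disjoint_compl_right⟩

theorem StronglyZeroDim.exists_locallyFinite_clopen_refinement [ParacompactSpace X]
    (hX : StronglyZeroDim X) {u : ι → Set X} (hu : ∀ i, IsOpen (u i))
    (hcover : ⋃ i, u i = univ) :
    ∃ V : ι → Set X, (∀ i, IsClopen (V i)) ∧ LocallyFinite V ∧ ⋃ i, V i = univ ∧
      ∀ i, V i ⊆ u i := by
  have := hX.normalSpace
  obtain ⟨v, hv, hvcover, hvfin, hvu⟩ := precise_refinement u hu hcover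
  obtain ⟨F, hFcover, hF, hFv⟩ :=
    exists_iUnion_eq_closed_subset hv hvfin.point_finite hvcover
  choose V hV hFV hVdisj using fun i =>
    hX (F i) (v i)ᶜ (hF i) (hv i).isClosed_compl (disjoint_compl_right_iff_subset.2 (hFv i))
  have hVv : ∀ i, V i ⊆ v i := fun i => disjoint_compl_right_iff_subset.1 (hVdisj i)
  exact ⟨V, hV, hvfin.subset hVv, univ_subset_iff.1 (hFcover ▸ iUnion_mono hFV),
    fun i => (hVv i).trans (hvu i)⟩

/-- Send each point to the least index (for a well-order) of a set containing it; the fibres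
`V i \ ⋃ j < i, V j` are open because a locally finite union of closed sets is closed. -/
theorem exists_isLocallyConstant_mem_of_locallyFinite {V : ι → Set X}
    (hV : ∀ i, IsClopen (V i)) (hfin : LocallyFinite V) (hcover : ⋃ i, V i = univ) :
    ∃ c : X → ι, IsLocallyConstant c ∧ ∀ x, x ∈ V (c x) := by
  obtain ⟨_, _⟩ := exists_wellFoundedLT ι
  have hne : ∀ x, {i | x ∈ V i}.Nonempty := fun x => mem_iUnion.1 (hcover.symm ▸ mem_univ x)
  refine ⟨fun x => wellFounded_lt.min _ (hne x), IsLocallyConstant.iff_isOpen_fiber.2 fun i => ?_,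
    fun x => wellFounded_lt.min_mem _ (hne x)⟩
  have hfiber :
      (fun x => wellFounded_lt.min _ (hne x)) ⁻¹' {i} = V i \ ⋃ j : {j // j < i}, V j := by
    ext x
    simp only [mem_preimage, mem_singleton_iff, mem_sdiff, mem_iUnion, Subtype.exists, not_exists]
    constructor
    · rintro rfl
      exact ⟨wellFounded_lt.min_mem _ (hne x),
        fun j hj hx => wellFounded_lt.not_lt_min {i | x ∈ V i} hx hj⟩
    · rintro ⟨hx, hmin⟩
      refine le_antisymm (wellFounded_lt.min_le (β := ι) hx) (not_lt.1 fun h => ?_)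
      exact hmin _ h (wellFounded_lt.min_mem _ (hne x))
  rw [hfiber]
  exact (hV i).isOpen.sdiff
    ((hfin.comp_injective Subtype.val_injective).isClosed_iUnion fun j => (hV j).isClosed)

theorem StronglyZeroDim.exists_isLocallyConstant_mem [ParacompactSpace X]
    (hX : StronglyZeroDim X) {u : ι → Set X} (hu : ∀ i, IsOpen (u i))
    (hcover : ⋃ i, u i = univ) :
    ∃ c : X → ι, IsLocallyConstant c ∧ ∀ x, x ∈ u (c x) := by
  obtain ⟨V, hV, hfin, hVcover, hVu⟩ := hX.exists_locallyFinite_clopen_refinement hu hcover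
  obtain ⟨c, hc, hcV⟩ := exists_isLocallyConstant_mem_of_locallyFinite hV hfin hVcover
  exact ⟨c, hc, fun x => hVu _ (hcV x)⟩

end LocallyConstantRefinement

theorem StronglyZeroDim.exists_isLocallyConstant_dist_le {Y : Type*} [MetricSpace Y]
    (hY : StronglyZeroDim Y) {a : ℝ} (ha : 0 < a) :
    ∃ c : Y → Y, IsLocallyConstant c ∧ ∀ x y, c x = c y → dist x y ≤ a := by
  obtain ⟨c, hc, hmem⟩ := hY.exists_isLocallyConstant_mem (fun x => Metric.isOpen_ball)
    (iUnion_eq_univ_iff.2 fun x => ⟨x, Metric.mem_ball_self (half_pos ha)⟩)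
  refine ⟨c, hc, fun x y hxy => ?_⟩
  have hx := Metric.mem_ball.1 (hmem x)
  have hy := Metric.mem_ball.1 (hxy ▸ hmem y)
  linarith [dist_triangle_right x y (c x)]

section GapDist

open Classical

variable {Y ι : Type*} [MetricSpace Y] (c : Y → ι) (b : ℝ)

noncomputable def gapDist (x y : Y) : ℝ :=
  max (dist x y) (if c x = c y then 0 else b)

variable {c b}

theorem dist_le_gapDist (x y : Y) : dist x y ≤ gapDist c b x y := le_max_left _ _

theorem gapDist_of_eq {x y : Y} (h : c x = c y) : gapDist c b x y = dist x y := by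
  simp [gapDist, h]

theorem gapDist_of_ne {x y : Y} (h : c x ≠ c y) : gapDist c b x y = max (dist x y) b := by
  simp [gapDist, h]

theorem abs_gapDist_sub_dist_le (hb : 0 ≤ b) (x y : Y) : |gapDist c b x y - dist x y| ≤ b := by
  have hle : gapDist c b x y ≤ dist x y + b :=
    max_le (by linarith) (by split_ifs <;> linarith [dist_nonneg (x := x) (y := y)])
  exact abs_sub_le_iff.2 ⟨by linarith, by linarith [dist_le_gapDist (c := c) (b := b) x y]⟩

theorem gapDist_self (x : Y) : gapDist c b x x = 0 := by simp [gapDist]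

theorem gapDist_comm (x y : Y) : gapDist c b x y = gapDist c b y x := by
  by_cases h : c x = c y
  · rw [gapDist_of_eq h, gapDist_of_eq h.symm, dist_comm]
  · rw [gapDist_of_ne h, gapDist_of_ne (Ne.symm h), dist_comm]

theorem gapDist_triangle (hb : 0 ≤ b) (x y z : Y) :
    gapDist c b x z ≤ gapDist c b x y + gapDist c b y z := by
  have hjump : (if c x = c z then 0 else b) ≤
      (if c x = c y then 0 else b) + (if c y = c z then 0 else b) := by
    split_ifs <;> simp_all
  exact max_le ((dist_triangle x y z).trans (add_le_add (le_max_left _ _) (le_max_left _ _)))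
    (hjump.trans (add_le_add (le_max_right _ _) (le_max_right _ _)))

theorem isOpen_iff_gapDist (hc : IsLocallyConstant c) (s : Set Y) :
    IsOpen s ↔ ∀ x ∈ s, ∃ ε > 0, ∀ y, gapDist c b x y < ε → y ∈ s := by
  refine ⟨fun hs x hx => ?_, fun h => isOpen_iff_mem_nhds.2 fun x hx => ?_⟩
  · obtain ⟨ε, hε, hball⟩ := Metric.isOpen_iff.1 hs x hx
    refine ⟨ε, hε, fun y hy => hball ?_⟩
    rw [Metric.mem_ball, dist_comm]
    exact (dist_le_gapDist x y).trans_lt hy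
  · obtain ⟨ε, hε, hsub⟩ := h x hx
    filter_upwards [Metric.ball_mem_nhds x (gt_iff_lt.1 hε), hc.eventually_eq x] with y hy hcy
    rw [Metric.mem_ball, dist_comm] at hy
    exact hsub y (by rwa [gapDist_of_eq hcy.symm])

theorem gapDist_notMem_Ioo {a : ℝ} (hdiam : ∀ x y, c x = c y → dist x y ≤ a) (x y : Y) :
    gapDist c b x y ∉ Ioo a b := by
  rintro ⟨hlo, hhi⟩
  by_cases h : c x = c y
  · rw [gapDist_of_eq h] at hlo
    exact (hdiam x y h).not_gt hlo
  · rw [gapDist_of_ne h] at hhi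
    exact (le_max_right _ _).not_gt hhi

variable (c b)

noncomputable abbrev gapMetric (hc : IsLocallyConstant c) (hb : 0 ≤ b) : MetricSpace Y :=
  MetricSpace.ofDistTopology (gapDist c b) gapDist_self gapDist_comm (gapDist_triangle hb)
    (isOpen_iff_gapDist hc) fun x y h => dist_le_zero.1 (h ▸ dist_le_gapDist x y)

end GapDist

namespace MetricCompat

variable {X : Type*} [TopologicalSpace X]

@[ext]
theorem ext {d e : MetricCompat X} (h : ∀ x y, d.dist x y = e.dist x y) : d = e :=
  Subtype.ext (MetricSpace.ext (Dist.ext (funext₂ h)))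

theorem ofReal_abs_sub_le_supDist (d e : MetricCompat X) (x y : X) :
    ENNReal.ofReal |d.dist x y - e.dist x y| ≤ supDist d e :=
  le_iSup (fun p : X × X => ENNReal.ofReal |d.dist p.1 p.2 - e.dist p.1 p.2|) (x, y)

theorem supDist_le_ofReal {d e : MetricCompat X} {η : ℝ}
    (h : ∀ x y, |d.dist x y - e.dist x y| ≤ η) : supDist d e ≤ ENNReal.ofReal η :=
  iSup_le fun p => ENNReal.ofReal_le_ofReal (h p.1 p.2)

theorem supDist_self (d : MetricCompat X) : supDist d d = 0 := by
  simp [supDist]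

theorem supDist_comm (d e : MetricCompat X) : supDist d e = supDist e d := by
  simp only [supDist, abs_sub_comm]

theorem supDist_triangle (d e f : MetricCompat X) : supDist d f ≤ supDist d e + supDist e f := by
  refine iSup_le fun p => ?_
  calc ENNReal.ofReal |d.dist p.1 p.2 - f.dist p.1 p.2|
      ≤ ENNReal.ofReal (|d.dist p.1 p.2 - e.dist p.1 p.2| + |e.dist p.1 p.2 - f.dist p.1 p.2|) :=
        ENNReal.ofReal_le_ofReal (abs_sub_le _ _ _)
    _ = ENNReal.ofReal |d.dist p.1 p.2 - e.dist p.1 p.2| +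
        ENNReal.ofReal |e.dist p.1 p.2 - f.dist p.1 p.2| :=
        ENNReal.ofReal_add (abs_nonneg _) (abs_nonneg _)
    _ ≤ supDist d e + supDist e f :=
        add_le_add (ofReal_abs_sub_le_supDist _ _ _ _) (ofReal_abs_sub_le_supDist _ _ _ _)

theorem eq_of_supDist_eq_zero {d e : MetricCompat X} (h : supDist d e = 0) : d = e :=
  ext fun x y => sub_eq_zero.1 <| abs_eq_zero.1 <| le_antisymm
    (ENNReal.ofReal_eq_zero.1 (nonpos_iff_eq_zero.1 (h ▸ ofReal_abs_sub_le_supDist d e x y)))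
    (abs_nonneg _)

noncomputable abbrev supDistEMetricSpace : EMetricSpace (MetricCompat X) where
  edist := supDist
  edist_self := supDist_self
  edist_comm := supDist_comm
  edist_triangle := supDist_triangle
  eq_of_edist_eq_zero := eq_of_supDist_eq_zero

theorem topology_eq_supDistEMetricSpace :
    instTopologicalSpace = (supDistEMetricSpace (X := X)).toUniformSpace.toTopologicalSpace := by
  let _ := supDistEMetricSpace (X := X)
  have hball : ∀ (d : MetricCompat X) r, { e | supDist d e < r } = Metric.eball d r :=
    fun d r => by ext e; exact (Metric.mem_eball' (x := d) (y := e)).symm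
  refine le_antisymm (fun s hs => ?_) (le_generateFrom ?_)
  · refine isOpen_iff_forall_mem_open.2 fun d hd => ?_
    obtain ⟨r, hr, hsub⟩ := EMetric.isOpen_iff.1 hs d hd
    exact ⟨_, hsub, TopologicalSpace.isOpen_generateFrom_of_mem ⟨d, r, hr, (hball d r).symm⟩,
      Metric.mem_eball_self hr⟩
  · rintro _ ⟨d, r, -, rfl⟩
    rw [hball]
    exact Metric.isOpen_eball

noncomputable instance : EMetricSpace (MetricCompat X) :=
  supDistEMetricSpace.replaceTopology topology_eq_supDistEMetricSpace

theorem abs_dist_sub_lt_of_edist_lt {d e : MetricCompat X} {δ : ℝ}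
    (h : edist d e < ENNReal.ofReal δ) (x y : X) : |d.dist x y - e.dist x y| < δ :=
  (ENNReal.ofReal_lt_ofReal_iff'.1 ((ofReal_abs_sub_le_supDist d e x y).trans_lt h)).1

theorem exists_edist_le_notMem_Ioo (hX : StronglyZeroDim X) (d : MetricCompat X) {η : ℝ}
    (hη : 0 < η) :
    ∃ e : MetricCompat X, edist e d ≤ ENNReal.ofReal η ∧
      ∀ x y, e.dist x y ∉ Ioo (η / 2) η := by
  obtain ⟨m, rfl⟩ := d
  let _ := m
  obtain ⟨c, hc, hdiam⟩ := hX.exists_isLocallyConstant_dist_le (half_pos hη)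
  exact ⟨⟨gapMetric c η hc hη.le, rfl⟩, supDist_le_ofReal (abs_gapDist_sub_dist_le hη.le),
    gapDist_notMem_Ioo hdiam⟩

def gapSet (ε : ℝ) : Set (MetricCompat X) :=
  { e | ∃ a b, 0 < a ∧ a < b ∧ b ≤ ε ∧ ∀ p x, e.dist p x ∉ Ioo a b }

theorem isOpen_gapSet (ε : ℝ) : IsOpen (gapSet (X := X) ε) := by
  refine EMetric.isOpen_iff.2 ?_
  rintro e ⟨a, b, ha, hab, hbε, hgap⟩
  set δ := (b - a) / 3 with hδ
  refine ⟨ENNReal.ofReal δ, ENNReal.ofReal_pos.2 (by positivity), fun e' he' => ?_⟩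
  refine ⟨a + δ, b - δ, by positivity, by linarith, by linarith, fun p x hpx => hgap p x ?_⟩
  have := abs_sub_lt_iff.1 (abs_dist_sub_lt_of_edist_lt (Metric.mem_eball.1 he') p x)
  exact ⟨by linarith [hpx.1], by linarith [hpx.2]⟩

theorem dense_gapSet (hX : StronglyZeroDim X) {ε : ℝ} (hε : 0 < ε) :
    Dense (gapSet (X := X) ε) := by
  refine EMetric.dense_iff.2 fun d r hr => ?_
  obtain ⟨η, -, hη, hηr⟩ :=
    ENNReal.lt_iff_exists_real_btwn.1 (lt_min hr (ENNReal.ofReal_pos.2 hε))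
  have hη₀ : 0 < η := ENNReal.ofReal_pos.1 hη
  obtain ⟨e, hed, hgap⟩ := exists_edist_le_notMem_Ioo hX d hη₀
  refine ⟨e, hed.trans_lt (hηr.trans_le (min_le_left _ _)), η / 2, η, by positivity,
    by linarith, ?_, hgap⟩
  exact (ENNReal.ofReal_lt_ofReal_iff'.1 (hηr.trans_le (min_le_right _ _))).1.le

theorem gapLike_of_forall_mem_gapSet {e : MetricCompat X}
    (h : ∀ n : ℕ, e ∈ gapSet (1 / (n + 1 : ℝ))) : GapLike e := by
  rintro p ⟨U, hU, -, hUsub⟩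
  obtain ⟨ε, hε, hIco⟩ := mem_nhdsGE_iff_exists_Ico_subset.1 hU
  obtain ⟨n, hn⟩ := exists_nat_one_div_lt (mem_Ioi.1 hε)
  obtain ⟨a, b, ha, hab, hb, hgap⟩ := h n
  have hmid : (a + b) / 2 ∈ closure { r : ℝ | ∃ x : X, e.dist p x = r } :=
    hUsub (hIco ⟨by linarith, by linarith⟩)
  obtain ⟨_, hr, x, rfl⟩ :=
    mem_closure_iff.1 hmid _ (isOpen_Ioo (a := a) (b := b)) ⟨by linarith, by linarith⟩
  exact hgap p x hr

end MetricCompat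

theorem gapLike_comeager_general
    {X : Type*} [TopologicalSpace X]
    (hX : StronglyZeroDim X) :
    { d : MetricCompat X | GapLike d } ∈ residual (MetricCompat X) := by
  have hgaps : ⋂ n : ℕ, MetricCompat.gapSet (X := X) (1 / (n + 1 : ℝ)) ∈ residual _ :=
    countable_iInter_mem.2 fun n => residual_of_dense_open (MetricCompat.isOpen_gapSet _)
      (MetricCompat.dense_gapSet hX (by positivity))
  exact Filter.mem_of_superset hgaps fun e he =>
    MetricCompat.gapLike_of_forall_mem_gapSet (mem_iInter.1 he)

/-- Theorem 1.2: for a strongly `0`-dimensional metrizable space `X`, the set of gap-like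
metrics is comeager in `(Met(X), D_X)`. -/
theorem gapLike_comeager
    {X : Type*} [TopologicalSpace X] [TopologicalSpace.MetrizableSpace X]
    (hX : StronglyZeroDim X) :
    { d : MetricCompat X | GapLike d } ∈ residual (MetricCompat X) :=
  gapLike_comeager_general hX
end

section
/- Let S be a closed, totally disconnected subset of [0,∞) containing 0. Then there exists a family {A_q}_{q∈ℤ≥0} such that each A_q is a q-nebula and S = ⋂_{q∈ℤ≥0} A_q. -/
/-
Choose cut points `0 = y 0 ≤ y 1 ≤ ⋯ → ∞` outside `S` with gaps `< 2^{-q}`; this is possible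
because a totally disconnected subset of `ℝ` contains no open interval. The convex hulls of the
nonempty pieces `S ∩ [y j, y (j+1)]`, `j < M`, are disjoint compact intervals of length `< 2^{-q}`
that meet `S`, and together with `[y M, ∞)` for `y M > q` they form a `q`-nebula containing `S`.
A point outside the closed set `S` lies at positive distance from it, so it misses these nebulae
as soon as `2^{-q}` is below that distance and `q` is above the point.
-/

open Set

/-- A closed subset `A` of `[0,∞)` is a `q`-nebula if it is a disjoint union of closed
intervals `I 0, …, I k` with `0 ∈ I 0`, the intervals `I 0, …, I (k-1)` compact of diameter
`< 2^{-q}`, and `I k` an unbounded closed interval contained in `(q, ∞)`. -/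
def IsNebula (q : ℕ) (A : Set ℝ) : Prop :=
  IsClosed A ∧ A ⊆ Set.Ici 0 ∧
  ∃ (k : ℕ) (I : Fin (k + 1) → Set ℝ),
    A = ⋃ i, I i ∧
    (0 : ℝ) ∈ I 0 ∧
    (∀ i : Fin (k + 1), (i : ℕ) < k →
      ∃ a b : ℝ, a ≤ b ∧ I i = Set.Icc a b ∧ b - a < (2 : ℝ) ^ (-(q : ℤ))) ∧
    (∃ a : ℝ, I (Fin.last k) = Set.Ici a ∧ (q : ℝ) < a) ∧
    Pairwise (Function.onFun Disjoint I)

open Filter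

def nebulaOf (L : List (ℝ × ℝ)) (c : ℝ) : Set ℝ :=
  (⋃ p ∈ L, Icc p.1 p.2) ∪ Ici c

namespace nebulaOf

def intervals (L : List (ℝ × ℝ)) (c : ℝ) (i : Fin (L.length + 1)) : Set ℝ :=
  if h : (i : ℕ) < L.length then Icc L[i].1 L[i].2 else Ici c

variable {L : List (ℝ × ℝ)} {c : ℝ}

lemma intervals_castSucc (i : Fin L.length) :
    intervals L c i.castSucc = Icc L[(i : ℕ)].1 L[(i : ℕ)].2 := by
  simp [intervals]

lemma intervals_last : intervals L c (Fin.last _) = Ici c := by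
  simp [intervals]

lemma iUnion_intervals : ⋃ i, intervals L c i = nebulaOf L c := by
  simp only [iUnion_fin_add_one_eq_iUnion_castSucc, Function.comp_def, intervals_castSucc,
    intervals_last, nebulaOf]
  congr 1
  ext x
  simp only [mem_iUnion, exists_prop, List.exists_mem_iff_get]
  rfl

lemma pairwise_disjoint_intervals (hL : L.Pairwise fun p p' => p.2 < p'.1)
    (hc : ∀ p ∈ L, p.2 < c) : Pairwise (Function.onFun Disjoint (intervals L c)) := by
  refine (pairwise_disjoint_on _).2 fun i j hij => ?_
  have hi : (i : ℕ) < L.length := by omega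
  obtain ⟨i, rfl⟩ : ∃ i' : Fin L.length, i'.castSucc = i := ⟨⟨i, hi⟩, rfl⟩
  rw [intervals_castSucc, Set.disjoint_left]
  rintro x ⟨-, hxi⟩
  by_cases hj : (j : ℕ) < L.length
  · obtain ⟨j, rfl⟩ : ∃ j' : Fin L.length, j'.castSucc = j := ⟨⟨j, hj⟩, rfl⟩
    rw [intervals_castSucc]
    have := List.pairwise_iff_getElem.1 hL i j i.2 j.2 hij
    exact fun hxj => by linarith [hxj.1]
  · obtain rfl : j = Fin.last _ := Fin.ext (by simp; omega)
    rw [intervals_last]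
    have := hc _ (List.getElem_mem i.2)
    exact fun hxj => by linarith [show c ≤ x from hxj]

lemma isClosed : IsClosed (nebulaOf L c) :=
  (L.finite_toSet.isClosed_biUnion fun _ _ => isClosed_Icc).union isClosed_Ici

lemma subset_Ici (hL : ∀ p ∈ L, 0 ≤ p.1) (hc : 0 ≤ c) : nebulaOf L c ⊆ Ici 0 := by
  rintro x (hx | hx)
  · obtain ⟨p, hp, hxp⟩ := mem_iUnion₂.1 hx
    exact (hL p hp).trans hxp.1
  · exact hc.trans hx

end nebulaOf

open nebulaOf in
theorem isNebula_nebulaOf {L : List (ℝ × ℝ)} {c : ℝ} {q : ℕ}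
    (hL : L.Pairwise fun p p' => p.2 < p'.1) (hhead : ∃ p ∈ L.head?, (0 : ℝ) ∈ Icc p.1 p.2)
    (hbounds : ∀ p ∈ L, 0 ≤ p.1 ∧ p.1 ≤ p.2 ∧ p.2 - p.1 < (2 : ℝ) ^ (-(q : ℤ)) ∧ p.2 < c)
    (hc : (q : ℝ) < c) : IsNebula q (nebulaOf L c) := by
  obtain ⟨p₀, hp₀, h0⟩ := hhead
  refine ⟨isClosed, subset_Ici (fun p hp => (hbounds p hp).1) ((Nat.cast_nonneg q).trans hc.le),
    L.length, intervals L c, iUnion_intervals.symm, ?_, fun i hi => ?_, ⟨c, intervals_last, hc⟩,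
    pairwise_disjoint_intervals hL fun p hp => (hbounds p hp).2.2.2⟩
  · obtain ⟨p, tl, rfl⟩ := List.exists_cons_of_ne_nil (l := L) (by rintro rfl; simp at hp₀)
    obtain rfl : p = p₀ := by simpa using hp₀
    exact intervals_castSucc (L := p :: tl) (c := c) ⟨0, by simp⟩ ▸ h0
  · obtain ⟨i, rfl⟩ : ∃ i' : Fin L.length, i'.castSucc = i := ⟨⟨i, hi⟩, rfl⟩
    obtain ⟨-, h1, h2, -⟩ := hbounds _ (List.getElem_mem i.2)
    exact ⟨_, _, h1, intervals_castSucc i, h2⟩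

theorem IsTotallyDisconnected.exists_mem_Ioo_notMem {α : Type*}
    [ConditionallyCompleteLinearOrder α] [TopologicalSpace α] [OrderTopology α] [DenselyOrdered α]
    {S : Set α}
    (hS : IsTotallyDisconnected S) {a b : α} (hab : a < b) : ∃ x ∈ Ioo a b, x ∉ S := by
  by_contra! h
  exact Set.Ioo_infinite hab (hS _ h isPreconnected_Ioo).finite

theorem IsTotallyDisconnected.exists_cuts_notMem {S : Set ℝ} (hS : IsTotallyDisconnected S)
    {ε : ℝ} (hε : 0 < ε) :
    ∃ y : ℕ → ℝ, y 0 = 0 ∧ Monotone y ∧ Tendsto y atTop atTop ∧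
      (∀ j, y (j + 1) ∉ S) ∧ ∀ j, y (j + 1) - y j < ε := by
  obtain ⟨δ, hδ, rfl⟩ : ∃ δ, 0 < δ ∧ ε = 2 * δ := ⟨ε / 2, half_pos hε, by ring⟩
  choose z hz hzS using fun j : ℕ =>
    hS.exists_mem_Ioo_notMem (a := j * δ) (b := (j + 1) * δ) (by nlinarith)
  set y := Function.update z 0 0
  have hy_succ : ∀ j, y (j + 1) = z (j + 1) := fun j => Function.update_of_ne j.succ_ne_zero _ _
  have hy_bounds : ∀ j : ℕ, j * δ ≤ y j ∧ y j < (j + 1) * δ := by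
    rintro (_ | j)
    · simp [y, hδ]
    · rw [hy_succ]
      exact ⟨(hz _).1.le, (hz _).2⟩
  have hy_step : ∀ j, y j < y (j + 1) ∧ y (j + 1) - y j < 2 * δ := fun j => by
    have := hy_bounds j
    have := hy_bounds (j + 1)
    push_cast at *
    constructor <;> linarith
  exact ⟨y, by simp [y], monotone_nat_of_le_succ fun j => (hy_step j).1.le,
    tendsto_atTop_mono (fun j => (hy_bounds j).1)
      (tendsto_natCast_atTop_atTop.atTop_mul_const hδ),
    fun j => hy_succ j ▸ hzS _, fun j => (hy_step j).2⟩

section pieces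

variable (S : Set ℝ) (y : ℕ → ℝ)

def piece (j : ℕ) : Set ℝ := S ∩ Icc (y j) (y (j + 1))

noncomputable def pieceHull (j : ℕ) : ℝ × ℝ := (sInf (piece S y j), sSup (piece S y j))

-- Empty pieces must be dropped: their `pieceHull` is the junk value `(0, 0)`.
open Classical in
noncomputable def pieceHulls (M : ℕ) : List (ℝ × ℝ) :=
  ((List.range M).filter fun j => (piece S y j).Nonempty).map (pieceHull S y)

variable {S y} (hS : IsClosed S)
include hS

lemma isCompact_piece (j : ℕ) : IsCompact (piece S y j) := isCompact_Icc.inter_left hS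

lemma piece_subset_Icc_pieceHull (j : ℕ) :
    piece S y j ⊆ Icc (pieceHull S y j).1 (pieceHull S y j).2 := fun _ hx =>
  ⟨csInf_le (isCompact_piece hS j).bddBelow hx, le_csSup (isCompact_piece hS j).bddAbove hx⟩

lemma exists_mem_pieceHulls_of_mem_piece {M j : ℕ} (hj : j < M) {x : ℝ} (hx : x ∈ piece S y j) :
    ∃ p ∈ pieceHulls S y M, x ∈ Icc p.1 p.2 := by
  refine ⟨pieceHull S y j, ?_, piece_subset_Icc_pieceHull hS j hx⟩
  simp only [pieceHulls, List.mem_map, List.mem_filter, List.mem_range, decide_eq_true_eq]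
  exact ⟨j, ⟨hj, x, hx⟩, rfl⟩

lemma exists_mem_pieceHulls (hy : Monotone y) {M : ℕ} (hM : 0 < M) {x : ℝ} (hx : x ∈ S)
    (hx0 : y 0 ≤ x) (hxM : x ≤ y M) : ∃ p ∈ pieceHulls S y M, x ∈ Icc p.1 p.2 := by
  rcases hx0.eq_or_lt with rfl | hx0
  · exact exists_mem_pieceHulls_of_mem_piece hS hM ⟨hx, le_rfl, hy (Nat.zero_le 1)⟩
  · have := (hy.biUnion_Ico_Ioc_map_succ 0 M).ge ⟨hx0, hxM⟩
    simp only [mem_iUnion, mem_Ico, Order.succ_eq_add_one] at this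
    obtain ⟨j, ⟨-, hj⟩, hxj⟩ := this
    exact exists_mem_pieceHulls_of_mem_piece hS hj ⟨hx, hxj.1.le, hxj.2⟩

lemma exists_mem_head_pieceHulls {M : ℕ} (hM : 0 < M) {x : ℝ} (hx : x ∈ piece S y 0) :
    ∃ p ∈ (pieceHulls S y M).head?, x ∈ Icc p.1 p.2 := by
  obtain ⟨M, rfl⟩ := Nat.exists_eq_add_of_lt hM
  have hne : (piece S y 0).Nonempty := ⟨x, hx⟩
  refine ⟨pieceHull S y 0, ?_, piece_subset_Icc_pieceHull hS 0 hx⟩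
  simp [pieceHulls, List.range_succ_eq_map, hne]

variable (hyS : ∀ j, y (j + 1) ∉ S)
include hyS

lemma pieceHull_bounds {j : ℕ} (hne : (piece S y j).Nonempty) :
    (pieceHull S y j).1 ∈ S ∧ y j ≤ (pieceHull S y j).1 ∧
      (pieceHull S y j).1 ≤ (pieceHull S y j).2 ∧ (pieceHull S y j).2 < y (j + 1) := by
  have hinf := (isCompact_piece hS j).sInf_mem hne
  have hsup := (isCompact_piece hS j).sSup_mem hne
  exact ⟨hinf.1, hinf.2.1, piece_subset_Icc_pieceHull hS j hinf |>.2,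
    hsup.2.2.lt_of_ne fun h => hyS j (h ▸ hsup.1)⟩

lemma exists_of_mem_pieceHulls {M : ℕ} {p : ℝ × ℝ} (hp : p ∈ pieceHulls S y M) :
    ∃ j < M, p.1 ∈ S ∧ y j ≤ p.1 ∧ p.1 ≤ p.2 ∧ p.2 < y (j + 1) := by
  simp only [pieceHulls, List.mem_map, List.mem_filter, List.mem_range, decide_eq_true_eq] at hp
  obtain ⟨j, ⟨hj, hne⟩, rfl⟩ := hp
  exact ⟨j, hj, pieceHull_bounds hS hyS hne⟩

lemma pairwise_pieceHulls (hy : Monotone y) (M : ℕ) :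
    (pieceHulls S y M).Pairwise fun p p' => p.2 < p'.1 := by
  rw [pieceHulls, List.pairwise_map, List.pairwise_filter]
  refine List.pairwise_lt_range.imp fun {j j'} hjj' hne hne' => ?_
  simp only [decide_eq_true_eq] at hne hne'
  calc (pieceHull S y j).2 < y (j + 1) := (pieceHull_bounds hS hyS hne).2.2.2
    _ ≤ y j' := hy hjj'
    _ ≤ (pieceHull S y j').1 := (pieceHull_bounds hS hyS hne').2.1

end pieces

theorem exists_isNebula_superset {S : Set ℝ} (hSsub : S ⊆ Ici 0) (hScl : IsClosed S)
    (hStd : IsTotallyDisconnected S) (hS0 : (0 : ℝ) ∈ S) (q : ℕ) :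
    ∃ A, IsNebula q A ∧ S ⊆ A ∧
      ∀ x ∈ A, (q : ℝ) < x ∨ ∃ s ∈ S, dist x s < (2 : ℝ) ^ (-(q : ℤ)) := by
  obtain ⟨y, hy0, hy, hytop, hyS, hyε⟩ :=
    hStd.exists_cuts_notMem (ε := (2 : ℝ) ^ (-(q : ℤ))) (by positivity)
  obtain ⟨M, hM⟩ := (hytop.eventually_gt_atTop (q : ℝ)).exists
  have hM0 : 0 < M := Nat.pos_of_ne_zero <| by
    rintro rfl
    linarith [hy0 ▸ hM, (Nat.cast_nonneg q : (0 : ℝ) ≤ q)]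
  have hhulls := fun p hp => exists_of_mem_pieceHulls (M := M) (p := p) hScl hyS hp
  refine ⟨nebulaOf (pieceHulls S y M) (y M), isNebula_nebulaOf (pairwise_pieceHulls hScl hyS hy M)
    (exists_mem_head_pieceHulls hScl hM0 ⟨hS0, hy0.le, hy0 ▸ hy (Nat.zero_le 1)⟩)
    (fun p hp => ?_) hM, fun x hx => ?_, fun x hx => ?_⟩
  · obtain ⟨j, hj, hpS, hp1, hp12, hp2⟩ := hhulls p hp
    exact ⟨hSsub hpS, hp12, by linarith [hyε j], hp2.trans_le (hy hj)⟩
  · rcases le_or_gt (y M) x with hMx | hxM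
    · exact Or.inr hMx
    · obtain ⟨p, hp, hxp⟩ := exists_mem_pieceHulls hScl hy hM0 hx (hy0 ▸ hSsub hx) hxM.le
      exact Or.inl (mem_iUnion₂.2 ⟨p, hp, hxp⟩)
  · rcases hx with hx | hx
    · obtain ⟨p, hp, hxp⟩ := mem_iUnion₂.1 hx
      obtain ⟨j, -, hpS, hp1, -, hp2⟩ := hhulls p hp
      refine Or.inr ⟨p.1, hpS, ?_⟩
      rw [Real.dist_eq, abs_of_nonneg (by linarith [hxp.1])]
      linarith [hyε j, hxp.2]
    · exact Or.inl (hM.trans_le hx)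

/-- Proposition 2.14: every closed totally disconnected subset `S` of `[0,∞)` containing `0`
is the intersection of a family `{A q}` where each `A q` is a `q`-nebula. -/
theorem eq_iInter_nebulae
    (S : Set ℝ) (hSsub : S ⊆ Set.Ici 0) (hScl : IsClosed S)
    (hStd : IsTotallyDisconnected S) (hS0 : (0 : ℝ) ∈ S) :
    ∃ A : ℕ → Set ℝ, (∀ q : ℕ, IsNebula q (A q)) ∧ S = ⋂ q, A q := by
  choose A hA hSA hnear using exists_isNebula_superset hSsub hScl hStd hS0
  refine ⟨A, hA, (subset_iInter hSA).antisymm fun x hx => ?_⟩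
  rw [← hScl.closure_eq, Metric.mem_closure_iff]
  intro δ hδ
  obtain ⟨n, hn⟩ := exists_pow_lt_of_lt_one hδ (by norm_num : (1 / 2 : ℝ) < 1)
  set q := max n ⌈x⌉₊
  rcases hnear q x (mem_iInter.1 hx q) with hqx | ⟨s, hs, hxs⟩
  · exact absurd hqx (not_lt.2 ((Nat.le_ceil x).trans (by exact_mod_cast le_max_right _ _)))
  · refine ⟨s, hs, ?_⟩
    calc dist x s < (2 : ℝ) ^ (-(q : ℤ)) := hxs
      _ = (1 / 2) ^ q := by rw [zpow_neg, zpow_natCast, one_div, inv_pow]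
      _ ≤ (1 / 2) ^ n := pow_le_pow_of_le_one (by norm_num) (by norm_num) (le_max_left _ _)
      _ < δ := hn
end
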